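/- arXiv:1412.5076 — 2 statements merged into one kernel-verified Lean document; each statement's English description precedes it below -/
import Mathlib

section
/- Let (V, L, ρ, *, Q) be a cyclic composition algebra and let λ, μ be invertible elements of L. Define a new product x ∗̃ y := λ(x*y) and a new form Q̃ := μQ. Then (V, L, ρ, ∗̃, Q̃) is a cyclic composition algebra if and only if μ = λ^# := ρ(λ)ρ²(λ). -/
/-!
Rescaling multiplies `Q(x ∗ y)` by `μλ²` and `ρ(Q x) ρ²(Q y)` by `ρ(μ) ρ²(μ)`, and it multiplies
`b_Q(x ∗ y, z)` by `μλ` and `ρ(b_Q(y ∗ z, x))` by `ρ(μλ)`. So the rescaled data is a cyclic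
composition algebra exactly when `μλ² = ρ(μ) ρ²(μ)` and `μλ` is `ρ`-invariant, provided `Q` and
`b_Q(x ∗ y, z)` take unit values to cancel; the latter come from unit values of `Q` and `b_Q` via
the polarised composition law `b_Q(x ∗ y, x ∗ z) = ρ(Q x) ρ²(b_Q(y, z))`. The two conditions hold for
`μ = λ^#`, and conversely they give `μλ² · λ^# = ρ(μλ) ρ²(μλ) = (μλ)²`, i.e. `μ = λ^#`.
-/

/-- A cyclic composition algebra over `(L, ρ)`: a module `V` over `L` (the scalar
action recorded as `smul`) with an `L`-valued nonsingular quadratic form `Q`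
(with polar form `bQ`) and an `F`-bilinear product `mul` which is `ρ`-semilinear
in the first variable and `ρ²`-semilinear in the second, satisfying
`Q(x*y) = ρ(Q x) ρ²(Q y)` and `b_Q(x*y,z) = ρ(b_Q(y*z,x)) = ρ²(b_Q(z*x,y))`. -/
structure CyclicComp (F : Type*) [Field F] (L : Type*) [CommRing L] [Algebra F L]
    (V : Type*) [AddCommGroup V] where
  ρ : L ≃ₐ[F] L
  rho_cube : ∀ ℓ : L, ρ (ρ (ρ ℓ)) = ℓ
  smul : L → V → V
  smul_add : ∀ (ℓ : L) (x y : V), smul ℓ (x + y) = smul ℓ x + smul ℓ y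
  add_smul : ∀ (ℓ m : L) (x : V), smul (ℓ + m) x = smul ℓ x + smul m x
  mul_smul : ∀ (ℓ m : L) (x : V), smul (ℓ * m) x = smul ℓ (smul m x)
  one_smul : ∀ x : V, smul 1 x = x
  mul : V → V → V
  mul_add_left : ∀ x y z : V, mul (x + y) z = mul x z + mul y z
  mul_add_right : ∀ x y z : V, mul x (y + z) = mul x y + mul x z
  mul_smul_left : ∀ (ℓ : L) (x y : V), mul (smul ℓ x) y = smul (ρ ℓ) (mul x y)
  mul_smul_right : ∀ (ℓ : L) (x y : V), mul x (smul ℓ y) = smul (ρ (ρ ℓ)) (mul x y)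
  Q : V → L
  bQ : V → V → L
  bQ_def : ∀ x y : V, bQ x y = Q (x + y) - Q x - Q y
  Q_smul : ∀ (ℓ : L) (x : V), Q (smul ℓ x) = ℓ ^ 2 * Q x
  bQ_smul_left : ∀ (ℓ : L) (x y : V), bQ (smul ℓ x) y = ℓ * bQ x y
  nondeg : ∀ x : V, (∀ y : V, bQ x y = 0) → x = 0
  comp : ∀ x y : V, Q (mul x y) = ρ (Q x) * ρ (ρ (Q y))
  assoc1 : ∀ x y z : V, bQ (mul x y) z = ρ (bQ (mul y z) x)
  assoc2 : ∀ x y z : V, bQ (mul x y) z = ρ (ρ (bQ (mul z x) y))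

theorem eq_map_mul_map_map_of_mul_sq_eq {R G : Type*} [CommRing R] [FunLike G R R]
    [RingHomClass G R R] (σ : G) {lam mu : R} (hlam : IsUnit lam) (hmu : IsUnit mu)
    (hsq : mu * lam ^ 2 = σ mu * σ (σ mu)) (hfix : σ (mu * lam) = mu * lam) :
    mu = σ lam * σ (σ lam) := by
  have hfix' : σ (σ (mu * lam)) = mu * lam := by rw [hfix, hfix]
  rw [map_mul] at hfix
  rw [map_mul, map_mul] at hfix'
  refine (hmu.mul (hlam.pow 2)).mul_left_cancel ?_
  linear_combination (-(σ lam * σ (σ lam))) * hsq - (σ (σ mu) * σ (σ lam)) * hfix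
    - (mu * lam) * hfix'

namespace CyclicComp

variable {F L V : Type*} [Field F] [CommRing L] [Algebra F L] [AddCommGroup V]

section

variable (C : CyclicComp F L V)

theorem Q_add (x y : V) : C.Q (x + y) = C.Q x + C.Q y + C.bQ x y := by
  rw [C.bQ_def]; ring

theorem bQ_mul_mul_left (x y z : V) :
    C.bQ (C.mul x y) (C.mul x z) = C.ρ (C.Q x) * C.ρ (C.ρ (C.bQ y z)) := by
  have h := C.comp x (y + z)
  rw [C.mul_add_right, C.Q_add, C.Q_add, C.comp, C.comp] at h
  simp only [map_add, mul_add] at h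
  linear_combination h

theorem isUnit_bQ_mul_mul {x y z : V} (hx : IsUnit (C.Q x)) (hyz : IsUnit (C.bQ y z)) :
    IsUnit (C.bQ (C.mul x y) (C.mul x z)) := by
  rw [bQ_mul_mul_left]
  exact (hx.map C.ρ).mul ((hyz.map C.ρ).map C.ρ)

def adj (ℓ : L) : L := C.ρ ℓ * C.ρ (C.ρ ℓ)

theorem rho_adj_mul_rho_rho_adj (ℓ : L) :
    C.ρ (C.adj ℓ) * C.ρ (C.ρ (C.adj ℓ)) = ℓ ^ 2 * C.adj ℓ := by
  simp only [adj, map_mul, C.rho_cube]; ring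

theorem rho_adj_mul_self (ℓ : L) : C.ρ (C.adj ℓ * ℓ) = C.adj ℓ * ℓ := by
  simp only [adj, map_mul, C.rho_cube]; ring

theorem rho_rho_adj_mul_self (ℓ : L) : C.ρ (C.ρ (C.adj ℓ * ℓ)) = C.adj ℓ * ℓ := by
  rw [rho_adj_mul_self, rho_adj_mul_self]

theorem isUnit_adj {ℓ : L} (hℓ : IsUnit ℓ) : IsUnit (C.adj ℓ) :=
  (hℓ.map C.ρ).mul ((hℓ.map C.ρ).map C.ρ)

def rescale (lam : Lˣ) : CyclicComp F L V where
  ρ := C.ρ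
  rho_cube := C.rho_cube
  smul := C.smul
  smul_add := C.smul_add
  add_smul := C.add_smul
  mul_smul := C.mul_smul
  one_smul := C.one_smul
  mul x y := C.smul lam (C.mul x y)
  mul_add_left x y z := by rw [C.mul_add_left, C.smul_add]
  mul_add_right x y z := by rw [C.mul_add_right, C.smul_add]
  mul_smul_left ℓ x y := by rw [C.mul_smul_left, ← C.mul_smul, ← C.mul_smul, mul_comm]
  mul_smul_right ℓ x y := by rw [C.mul_smul_right, ← C.mul_smul, ← C.mul_smul, mul_comm]
  Q x := C.adj lam * C.Q x
  bQ x y := C.adj lam * C.bQ x y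
  bQ_def x y := by rw [C.bQ_def]; ring
  Q_smul ℓ x := by rw [C.Q_smul]; ring
  bQ_smul_left ℓ x y := by rw [C.bQ_smul_left]; ring
  nondeg x hx := C.nondeg x fun y => ((C.isUnit_adj lam.isUnit).mul_right_eq_zero).mp (hx y)
  comp x y := by
    rw [C.Q_smul, C.comp, map_mul, map_mul, map_mul]
    linear_combination -(C.ρ (C.Q x) * C.ρ (C.ρ (C.Q y))) * C.rho_adj_mul_rho_rho_adj lam
  assoc1 x y z := by
    rw [C.bQ_smul_left, C.bQ_smul_left, C.assoc1 x y z, ← mul_assoc, ← mul_assoc, map_mul,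
      rho_adj_mul_self]
  assoc2 x y z := by
    rw [C.bQ_smul_left, C.bQ_smul_left, C.assoc2 x y z, ← mul_assoc, ← mul_assoc, map_mul,
      map_mul, rho_rho_adj_mul_self]

end

section

variable {C C' : CyclicComp F L V} {lam mu : L}

theorem bQ_eq_mul_of_Q_eq (hQ : ∀ x, C'.Q x = mu * C.Q x) (x y : V) :
    C'.bQ x y = mu * C.bQ x y := by
  rw [C'.bQ_def, hQ, hQ, hQ, C.bQ_def]; ring

theorem mul_sq_eq_of_rescaled (hρ : C'.ρ = C.ρ)
    (hm : ∀ x y, C'.mul x y = C.smul lam (C.mul x y)) (hQ : ∀ x, C'.Q x = mu * C.Q x)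
    {x : V} (hx : IsUnit (C.Q x)) : mu * lam ^ 2 = C.ρ mu * C.ρ (C.ρ mu) := by
  have h := C'.comp x x
  rw [hm, hQ, hQ, hρ, C.Q_smul, C.comp, map_mul, map_mul] at h
  refine ((hx.map C.ρ).mul ((hx.map C.ρ).map C.ρ)).mul_right_cancel ?_
  linear_combination h

theorem rho_mul_eq_of_rescaled (hρ : C'.ρ = C.ρ)
    (hm : ∀ x y, C'.mul x y = C.smul lam (C.mul x y)) (hQ : ∀ x, C'.Q x = mu * C.Q x)
    {x y z : V} (hxyz : IsUnit (C.bQ (C.mul x y) z)) : C.ρ (mu * lam) = mu * lam := by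
  have h := C'.assoc1 x y z
  rw [hm, hm, bQ_eq_mul_of_Q_eq hQ, bQ_eq_mul_of_Q_eq hQ, hρ, C.bQ_smul_left, C.bQ_smul_left,
    map_mul, map_mul, ← C.assoc1] at h
  refine hxyz.mul_right_cancel ?_
  rw [map_mul]
  linear_combination -h

end

end CyclicComp

/-- For invertible `λ, μ ∈ L`, the data `x ∗̃ y := λ(x*y)`,
`Q̃ := μQ` is again a cyclic composition algebra if and only if
`μ = λ^# = ρ(λ)ρ²(λ)`.  (The hypotheses `hQu`, `hbQu` record that the
nonsingular form `Q` on the free module `V` takes unit values.) -/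
theorem cyclicComp_rescale_iff
    {F L V : Type*} [Field F] [CommRing L] [Algebra F L] [AddCommGroup V]
    (C : CyclicComp F L V)
    (hQu : ∃ x : V, IsUnit (C.Q x))
    (hbQu : ∃ x y : V, IsUnit (C.bQ x y))
    (lam mu : Lˣ) :
    (∃ C' : CyclicComp F L V, C'.ρ = C.ρ ∧ C'.smul = C.smul ∧
        (∀ x y : V, C'.mul x y = C.smul (lam : L) (C.mul x y)) ∧
        (∀ x : V, C'.Q x = (mu : L) * C.Q x)) ↔
      (mu : L) = C.ρ (lam : L) * C.ρ (C.ρ (lam : L)) := by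
  constructor
  · rintro ⟨C', hρ, -, hm, hQ⟩
    obtain ⟨x, hx⟩ := hQu
    obtain ⟨y, z, hyz⟩ := hbQu
    exact eq_map_mul_map_map_of_mul_sq_eq C.ρ lam.isUnit mu.isUnit
      (CyclicComp.mul_sq_eq_of_rescaled hρ hm hQ hx)
      (CyclicComp.rho_mul_eq_of_rescaled hρ hm hQ (C.isUnit_bQ_mul_mul hx hyz))
  · intro hmu
    exact ⟨C.rescale lam, rfl, rfl, fun _ _ => rfl, fun _ => by rw [hmu]; rfl⟩
end

section
/- Let F be an algebraically closed field of characteristic ≠ 2, 3. For a Type III grading Γ by an abelian group G on the cyclic composition algebra (V, L, ρ, *, Q) of rank 8 with V_e ≠ 0, the identity component V_e is an F-subalgebra of (V, *) on which Q takes values in F·1, and (V_e, *, Q|_{V_e}) is a symmetric composition algebra over F; hence dim_F V_e ∈ {1, 2, 4, 8}. -/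
/-- The cyclic shift automorphism `ρ(ℓ₁,ℓ₂,ℓ₃) = (ℓ₂,ℓ₃,ℓ₁)` of `L = F×F×F`. -/
def cyclicShift (F : Type*) [Field F] : (F × F × F) ≃ₐ[F] (F × F × F) where
  toFun p := (p.2.1, p.2.2, p.1)
  invFun p := (p.2.2, p.1, p.2.1)
  left_inv _ := rfl
  right_inv _ := rfl
  map_mul' _ _ := rfl
  map_add' _ _ := rfl
  commutes' _ := rfl

/-!
The grading forces `b_Q` to take values in `F · 1` on `V_e × V_e`: if `x ∈ V_a`, `y ∈ V_b` and
`b_Q(x, y) = c ξ^k ≠ 0`, then `h^k = ab`, and `ab = e` forces `3 ∣ k`, so `ξ^k = 1`. Hence `Q`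
is scalar on `V_e`, `ρ` fixes these values, and the identities of the cyclic composition algebra
become those of a symmetric composition algebra on `V_e`. Since multiplication by `ξ` maps `V_a`
to `V_{ha}`, a vector of `V_e` orthogonal to `V_e` is orthogonal to every `V_a`, which gives
nondegeneracy on `V_e`.

The dimension is then bounded by Hurwitz's theorem for (not necessarily unital) composition
algebras over an algebraically closed field: for an orthonormal basis `e_1, …, e_n`, the maps
`x ↦ e_i (e_n⁻¹ x)`, `i < n`, are skew-adjoint, square to `-1` and pairwise anticommute. Their
ordered products are told apart by the signs with which conjugation by each generator acts, so
they are linearly independent. This rules out odd `n ≥ 3` (determinants), `n = 6` (sixteen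
independent skew-adjoint products, but skew-adjoint maps form a space of dimension `15`) and even
`n ≥ 10` (`2 ^ (n - 2) > n ^ 2`).
-/

open Module

namespace LinearMap.BilinForm

variable {F S : Type*} [Field F] [AddCommGroup S] [Module F S] {b : LinearMap.BilinForm F S}

theorem exists_orthonormal_basis_of_isAlgClosed [IsAlgClosed F] [FiniteDimensional F S]
    (h2 : (2 : F) ≠ 0) (hb : b.IsSymm) (hnd : b.SeparatingLeft) :
    ∃ w : Basis (Fin (finrank F S)) F S, ∀ i j, b (w i) (w j) = if i = j then 1 else 0 := by
  have := invertibleOfNonzero h2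
  obtain ⟨v, hv⟩ := exists_orthogonal_basis (isSymm_iff.mp hb)
  have hself := hv.not_isOrtho_basis_self_of_separatingLeft hnd
  choose s hs using fun i => IsAlgClosed.exists_eq_mul_self (b (v i) (v i))⁻¹
  have hs0 : ∀ i, s i ≠ 0 := fun i hi => inv_ne_zero (hself i) (by rw [hs, hi, zero_mul])
  refine ⟨v.unitsSMul fun i => Units.mk0 (s i) (hs0 i), fun i j => ?_⟩
  simp only [Basis.unitsSMul_apply, Units.smul_mk0, map_smul, smul_apply, smul_eq_mul]
  split_ifs with hij
  · rw [hij, ← mul_assoc, ← hs, inv_mul_cancel₀ (hself j)]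
  · rw [hv hij, mul_zero, mul_zero]

theorem eq_of_separatingLeft (hnd : b.SeparatingLeft) {u v : S} (h : ∀ y, b u y = b v y) :
    u = v :=
  LinearMap.ker_eq_bot.mp (LinearMap.separatingLeft_iff_ker_eq_bot.mp hnd) (LinearMap.ext h)

theorem isSkewAdjoint_iff {f : Module.End F S} :
    b.IsSkewAdjoint f ↔ ∀ x y, b (f x) y = -b x (f y) := by
  simp [IsSkewAdjoint, LinearMap.IsAdjointPair]

theorem mul_self_eq_neg_one_of_isSkewAdjoint (hnd : b.SeparatingLeft) {f : Module.End F S}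
    (hf : b.IsSkewAdjoint f) (hiso : ∀ x y, b (f x) (f y) = b x y) : f * f = -1 :=
  LinearMap.ext fun x => eq_of_separatingLeft hnd fun y => by
    rw [Module.End.mul_apply, isSkewAdjoint_iff.mp hf, hiso]
    simp

theorem anticomm_of_isSkewAdjoint (hnd : b.SeparatingLeft) {f g : Module.End F S}
    (hf : b.IsSkewAdjoint f) (hg : b.IsSkewAdjoint g)
    (hfg : ∀ x y, b (g x) (f y) = -b (f x) (g y)) : f * g = -(g * f) :=
  LinearMap.ext fun x => eq_of_separatingLeft hnd fun y => by
    rw [LinearMap.neg_apply, map_neg, LinearMap.neg_apply, Module.End.mul_apply,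
      Module.End.mul_apply, isSkewAdjoint_iff.mp hf (g x), hfg, isSkewAdjoint_iff.mp hg (f x)]

theorem finrank_skewAdjointSubmodule_le [FiniteDimensional F S]
    (h2 : (2 : F) ≠ 0) (hb : b.IsSymm) (hnd : b.SeparatingLeft) :
    finrank F b.skewAdjointSubmodule ≤ (finrank F S).choose 2 := by
  classical
  let w := Module.finBasis F S
  let P := ({p : Fin (finrank F S) × Fin (finrank F S) | p.1 < p.2} : Finset _)
  let Ψ : b.skewAdjointSubmodule →ₗ[F] (P → F) :=
    { toFun f p := b (w p.1.1) (f.1 (w p.1.2))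
      map_add' f g := by ext; simp
      map_smul' c f := by ext; simp }
  have hΨ : Function.Injective Ψ := by
    rw [← LinearMap.ker_eq_bot, LinearMap.ker_eq_bot']
    rintro ⟨f, hf⟩ hΨf
    have hskew := isSkewAdjoint_iff.mp ((mem_skewAdjointSubmodule f).mp hf)
    have hupper : ∀ i j, i < j → b (w i) (f (w j)) = 0 := fun i j hij =>
      congrFun hΨf ⟨(i, j), by simpa [P] using hij⟩
    have hentry : ∀ i j, b (w i) (f (w j)) = 0 := by
      intro i j
      rcases lt_trichotomy i j with hij | rfl | hij
      · exact hupper i j hij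
      · have h := hskew (w i) (w i)
        rw [hb.eq] at h
        exact (mul_eq_zero.mp (by linear_combination h : (2 : F) * _ = 0)).resolve_left h2
      · rw [← neg_eq_zero, ← hskew, hb.eq]
        exact hupper j i hij
    have hfw : ∀ j, f (w j) = 0 := fun j => by
      have h0 : LinearMap.flip b (f (w j)) = 0 := w.ext fun i => hentry i j
      exact hnd _ fun y => by
        rw [hb.eq, ← LinearMap.flip_apply (f := b), h0, LinearMap.zero_apply]
    exact Subtype.ext (w.ext fun j => hfw j)
  calc finrank F b.skewAdjointSubmodule ≤ finrank F (P → F) :=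
        LinearMap.finrank_le_finrank_of_injective hΨ
    _ = (finrank F S).choose 2 := by
        rw [Module.finrank_fintype_fun_eq_card, Fintype.card_coe,
          Fintype.card_product_filter_lt, Fintype.card_fin]

end LinearMap.BilinForm

theorem LinearMap.even_finrank_of_anticomm {F S : Type*} [Field F] [AddCommGroup S]
    [Module F S] (h2 : (2 : F) ≠ 0) {f g : Module.End F S} (hf : IsUnit f) (hg : IsUnit g)
    (hfg : f * g = -(g * f)) : Even (finrank F S) := by
  by_contra hodd
  have hdet : LinearMap.det (f * g) = -LinearMap.det (g * f) := by
    rw [hfg, ← neg_one_smul F (g * f), LinearMap.det_smul,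
      (Nat.not_even_iff_odd.mp hodd).neg_one_pow, neg_one_mul]
  rw [map_mul, map_mul, mul_comm (LinearMap.det g)] at hdet
  have hzero : (2 : F) * (LinearMap.det f * LinearMap.det g) = 0 := by linear_combination hdet
  exact ((hf.map LinearMap.det).mul (hg.map LinearMap.det)).ne_zero
    ((mul_eq_zero.mp hzero).resolve_left h2)

theorem linearIndependent_of_separating_eigenvalues {F M ι κ : Type*} [Field F]
    [AddCommGroup M] [Module F M] {v : ι → M} (hv : ∀ i, v i ≠ 0) (c : κ → Module.End F M)
    (ε : κ → ι → F) (hc : ∀ k i, c k (v i) = ε k i • v i)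
    (hsep : ∀ i i', i ≠ i' → ∃ k, ε k i ≠ ε k i') :
    LinearIndependent F v := by
  classical
  rw [linearIndependent_iff']
  intro s
  induction s using Finset.strongInduction with
  | _ s ih =>
    intro g hg i hi
    have hvanish : ∀ j ∈ s, j ≠ i → g j = 0 := by
      intro j hj hji
      obtain ⟨k, hk⟩ := hsep i j (Ne.symm hji)
      have hshift : ∑ a ∈ s.erase i, ((ε k i - ε k a) * g a) • v a = 0 := by
        rw [Finset.sum_erase _ (by simp)]
        have h := congrArg (fun x => ε k i • x - c k x) hg
        simp only [Finset.smul_sum, map_sum, map_smul, hc, smul_smul, ← Finset.sum_sub_distrib,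
          map_zero, smul_zero, sub_zero] at h
        rw [← h]
        exact Finset.sum_congr rfl fun a _ => by rw [sub_mul, sub_smul, mul_comm (ε k a)]
      have := ih (s.erase i) (Finset.erase_ssubset hi) _ hshift j
        (Finset.mem_erase.mpr ⟨hji, hj⟩)
      exact (mul_eq_zero.mp this).resolve_left (sub_ne_zero.mpr hk)
    have hsingle : g i • v i = 0 := by
      rw [← hg, Finset.sum_eq_single_of_mem i hi fun j hj hji => by rw [hvanish j hj hji,
        zero_smul]]
    exact (smul_eq_zero.mp hsingle).resolve_right (hv i)

open Finset in
theorem Finset.exists_even_card_erase_ne {α : Type*} [Fintype α] [DecidableEq α]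
    {S T : Finset α} (hne : S ≠ T) (hcompl : T ≠ Sᶜ) :
    ∃ j, ¬(Even #(S.erase j) ↔ Even #(T.erase j)) := by
  obtain ⟨j, hj⟩ : ∃ j, (Even #S ↔ Even #T) ↔ ¬(j ∈ S ↔ j ∈ T) := by
    by_cases hpar : Even #S ↔ Even #T
    · obtain ⟨j, hj⟩ : ∃ j, ¬(j ∈ S ↔ j ∈ T) := by
        by_contra! h
        exact hne (ext h)
      exact ⟨j, by tauto⟩
    · obtain ⟨j, hj⟩ : ∃ j, (j ∈ S ↔ j ∈ T) := by
        by_contra! h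
        exact hcompl (ext fun j => by have := h j; rw [mem_compl]; tauto)
      exact ⟨j, by tauto⟩
  have herase : ∀ U : Finset α, Even #U ↔ (j ∈ U ↔ ¬Even #(U.erase j)) := fun U => by
    by_cases hjU : j ∈ U
    · rw [← card_erase_add_one hjU, Nat.even_add_one]
      tauto
    · rw [erase_eq_of_notMem hjU]
      tauto
  rw [herase S, herase T] at hj
  exact ⟨j, by tauto⟩

theorem Nat.add_two_sq_lt_two_pow {k : ℕ} (hk : 8 ≤ k) : (k + 2) ^ 2 < 2 ^ k := by
  induction k, hk using Nat.le_induction with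
  | base => norm_num
  | succ n hn ih =>
    rw [pow_succ 2]
    nlinarith

structure IsCliffordFamily {ι R : Type*} [Ring R] (A : ι → R) : Prop where
  mul_self : ∀ i, A i * A i = -1
  anticomm : ∀ i j, i ≠ j → A i * A j = -(A j * A i)

def cliffordMonomial {R : Type*} [Monoid R] {m : ℕ} (A : Fin m → R) (T : Finset (Fin m)) : R :=
  ((T.sort (· ≤ ·)).map A).prod

namespace IsCliffordFamily

section Ring

variable {R : Type*} [Ring R] {m : ℕ} {A : Fin m → R}

theorem isUnit (hA : IsCliffordFamily A) (i : Fin m) : IsUnit (A i) :=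
  ⟨⟨A i, -A i, by rw [mul_neg, hA.mul_self, neg_neg], by rw [neg_mul, hA.mul_self, neg_neg]⟩,
    rfl⟩

theorem isUnit_cliffordMonomial (hA : IsCliffordFamily A) (T : Finset (Fin m)) :
    IsUnit (cliffordMonomial A T) :=
  List.prod_isUnit fun _ hx => by
    obtain ⟨i, -, rfl⟩ := List.mem_map.mp hx
    exact hA.isUnit i

end Ring

variable {F R : Type*} [Field F] [Ring R] [Algebra F R]

theorem mul_prod_map {ι : Type*} [DecidableEq ι] {A : ι → R} (hA : IsCliffordFamily A) (a : ι)
    {l : List ι} (hl : l.Nodup) :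
    A a * (l.map A).prod = (-1 : F) ^ (l.erase a).length • ((l.map A).prod * A a) := by
  induction l with
  | nil => simp
  | cons x t ih =>
    obtain ⟨hxt, ht⟩ := List.nodup_cons.mp hl
    simp only [List.map_cons, List.prod_cons]
    by_cases hxa : x = a
    · subst hxa
      have h := ih ht
      rw [List.erase_of_not_mem hxt] at h
      rw [List.erase_cons_head]
      conv_lhs => rw [h]
      rw [mul_smul_comm, mul_assoc]
    · rw [List.erase_cons_tail (by simpa using hxa), List.length_cons, ← mul_assoc,
        hA.anticomm a x (Ne.symm hxa), neg_mul, mul_assoc, ih ht, mul_smul_comm, pow_succ,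
        mul_neg_one, neg_smul, mul_assoc]

variable {m : ℕ} {A : Fin m → R}

theorem mul_cliffordMonomial (hA : IsCliffordFamily A) (j : Fin m) (T : Finset (Fin m)) :
    A j * cliffordMonomial A T =
      (-1 : F) ^ (T.erase j).card • (cliffordMonomial A T * A j) := by
  rw [cliffordMonomial, hA.mul_prod_map (F := F) j (T.sort_nodup _), List.length_erase,
    Finset.card_erase_eq_ite]
  simp only [Finset.mem_sort, Finset.length_sort]

theorem conj_cliffordMonomial (hA : IsCliffordFamily A) (j : Fin m) (T : Finset (Fin m)) :
    -(A j * cliffordMonomial A T * A j) = (-1 : F) ^ (T.erase j).card • cliffordMonomial A T := by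
  rw [hA.mul_cliffordMonomial (F := F) j, smul_mul_assoc, mul_assoc, hA.mul_self, mul_neg_one,
    smul_neg, neg_neg]

/-- Conjugation by `A j` scales the monomial `A_T` by the sign `(-1)^#(T \ {j})`, and two
non-complementary subsets are told apart by one of these signs. -/
theorem linearIndependent_cliffordMonomial [Nontrivial R] (hF : (-1 : F) ≠ 1)
    (hA : IsCliffordFamily A) {ι : Type*} {T : ι → Finset (Fin m)} (hT : Function.Injective T)
    (hcompl : ∀ a a', T a' ≠ (T a)ᶜ) :
    LinearIndependent F fun a => cliffordMonomial A (T a) := by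
  refine linearIndependent_of_separating_eigenvalues
    (fun a => (hA.isUnit_cliffordMonomial (T a)).ne_zero)
    (fun j => -(LinearMap.mulLeft F (A j) ∘ₗ LinearMap.mulRight F (A j)))
    (fun j a => (-1 : F) ^ ((T a).erase j).card) (fun j a => by
      rw [LinearMap.neg_apply, LinearMap.comp_apply, LinearMap.mulRight_apply,
        LinearMap.mulLeft_apply, ← mul_assoc, hA.conj_cliffordMonomial (F := F)])
    fun a a' haa' => ?_
  obtain ⟨j, hj⟩ := Finset.exists_even_card_erase_ne (hT.ne haa') (hcompl a a')
  refine ⟨j, fun h => hj ?_⟩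
  simp only [neg_one_pow_eq_ite] at h
  split_ifs at h with h1 h2 h2 <;> tauto

end IsCliffordFamily

namespace IsCliffordFamily

variable {F S : Type*} [Field F] [AddCommGroup S] [Module F S]

theorem even_finrank (h2 : (2 : F) ≠ 0) {m : ℕ} {A : Fin m → Module.End F S}
    (hA : IsCliffordFamily A) (hm : 2 ≤ m) : Even (finrank F S) :=
  LinearMap.even_finrank_of_anticomm h2 (hA.isUnit ⟨0, by omega⟩) (hA.isUnit ⟨1, by omega⟩)
    (hA.anticomm _ _ (by simp [Fin.ext_iff]))

theorem two_pow_le_finrank_sq [FiniteDimensional F S] [Nontrivial S] (hF : (-1 : F) ≠ 1)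
    {k : ℕ} {A : Fin (k + 1) → Module.End F S} (hA : IsCliffordFamily A) :
    2 ^ k ≤ finrank F S ^ 2 := by
  have hind := hA.linearIndependent_cliffordMonomial hF
    (T := fun U : Finset (Fin k) => U.map Fin.castSuccEmb) (Finset.map_injective _)
    fun U U' h => by
      have hlast : Fin.last k ∉ U'.map Fin.castSuccEmb := by simp [Fin.castSucc_ne_last]
      rw [h, Finset.mem_compl, not_not] at hlast
      simp [Fin.castSucc_ne_last] at hlast
  have := hind.fintype_card_le_finrank
  rwa [Fintype.card_finset, Fintype.card_fin, Module.finrank_linearMap, ← sq] at this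

theorem bilin_prod_map_apply_left {b : LinearMap.BilinForm F S} {ι : Type*} [DecidableEq ι]
    {A : ι → Module.End F S} (hA : IsCliffordFamily A) (hskew : ∀ i, b.IsSkewAdjoint (A i))
    {l : List ι} (hl : l.Nodup) (x y : S) :
    b ((l.map A).prod x) y = (-1) ^ (l.length + 1).choose 2 * b x ((l.map A).prod y) := by
  induction l generalizing y with
  | nil => simp
  | cons i t ih =>
    obtain ⟨hit, ht⟩ := List.nodup_cons.mp hl
    have hswap := hA.mul_prod_map (F := F) i ht
    rw [List.erase_of_not_mem hit] at hswap
    simp only [List.map_cons, List.prod_cons, List.length_cons, Module.End.mul_apply]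
    rw [LinearMap.BilinForm.isSkewAdjoint_iff.mp (hskew i), ih ht, ← Module.End.mul_apply (A i),
      hswap, LinearMap.smul_apply, map_smul, smul_eq_mul, Module.End.mul_apply,
      Nat.choose_succ_succ' (t.length + 1), Nat.choose_one_right, pow_add, pow_succ]
    have hsq : ((-1 : F) ^ t.length) ^ 2 = 1 := by
      rw [← pow_mul, mul_comm, pow_mul, neg_one_sq, one_pow]
    linear_combination (b x ((t.map A).prod (A i y)) * (-1) ^ (t.length + 1).choose 2) * hsq

theorem finrank_ne_six [FiniteDimensional F S] (h2 : (2 : F) ≠ 0)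
    {b : LinearMap.BilinForm F S} (hb : b.IsSymm) (hnd : b.SeparatingLeft)
    {A : Fin 5 → Module.End F S} (hA : IsCliffordFamily A)
    (hskew : ∀ i, b.IsSkewAdjoint (A i)) : finrank F S ≠ 6 := by
  intro h6
  have : Nontrivial S := Module.nontrivial_of_finrank_eq_succ h6
  let ι := {T : Finset (Fin 5) // T.card = 1 ∨ T.card = 2 ∨ T.card = 5}
  have hmem : ∀ T : ι, cliffordMonomial A T.1 ∈ b.skewAdjointSubmodule := fun T => by
    rw [LinearMap.mem_skewAdjointSubmodule, LinearMap.BilinForm.isSkewAdjoint_iff]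
    intro x y
    have hsign : (-1 : F) ^ (T.1.card + 1).choose 2 = -1 := by
      rcases T.2 with h | h | h <;> rw [h] <;> norm_num [Nat.choose]
    rw [cliffordMonomial, hA.bilin_prod_map_apply_left hskew (T.1.sort_nodup _),
      Finset.length_sort, hsign, neg_one_mul]
  have hF : (-1 : F) ≠ 1 := fun h => h2 (by linear_combination -h)
  have hind : LinearIndependent F fun T : ι =>
      (⟨cliffordMonomial A T.1, hmem T⟩ : b.skewAdjointSubmodule) := by
    refine LinearIndependent.of_comp b.skewAdjointSubmodule.subtype ?_
    refine hA.linearIndependent_cliffordMonomial hF Subtype.val_injective fun T T' h => ?_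
    have hcard := congrArg Finset.card h
    rw [Finset.card_compl, Fintype.card_fin] at hcard
    rcases T.2 with h | h | h <;> rcases T'.2 with h' | h' | h' <;> omega
  have hle := (hind.fintype_card_le_finrank).trans
    (LinearMap.BilinForm.finrank_skewAdjointSubmodule_le h2 hb hnd)
  rw [h6] at hle
  exact absurd hle (by decide)

end IsCliffordFamily

section Composition

variable {F S : Type*} [Field F] [AddCommGroup S] [Module F S]

def IsComposition (b : LinearMap.BilinForm F S) (μ : S →ₗ[F] S →ₗ[F] S) : Prop :=
  ∀ x y, b (μ x y) (μ x y) = b x x * b y y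

variable {b : LinearMap.BilinForm F S} {μ : S →ₗ[F] S →ₗ[F] S}

namespace IsComposition

open LinearMap.BilinForm

theorem polar (hμ : IsComposition b μ) (hb : b.IsSymm) (h2 : (2 : F) ≠ 0) (x y u v : S) :
    b (μ x u) (μ y v) + b (μ x v) (μ y u) = 2 * b x y * b u v := by
  have polar_left : ∀ x y u : S, b (μ x u) (μ y u) = b x y * b u u := fun x y u => by
    have h := hμ (x + y) u
    simp only [map_add, LinearMap.add_apply] at h
    refine mul_left_cancel₀ h2 ?_
    linear_combination h - hμ x u - hμ y u - hb.eq (μ y u) (μ x u) + b u u * hb.eq y x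
  have h := polar_left x y (u + v)
  simp only [map_add, LinearMap.add_apply] at h
  linear_combination h - polar_left x y u - polar_left x y v + b x y * hb.eq v u

theorem left_mul_isometry (hμ : IsComposition b μ) (hb : b.IsSymm) (h2 : (2 : F) ≠ 0) {e : S}
    (he : b e e = 1) (x y : S) : b (μ e x) (μ e y) = b x y :=
  mul_left_cancel₀ h2 <| by
    linear_combination hμ.polar hb h2 e e x y + hb.eq (μ e x) (μ e y) + 2 * b x y * he

theorem left_mul_anticomm (hμ : IsComposition b μ) (hb : b.IsSymm) (h2 : (2 : F) ≠ 0)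
    {e e' : S} (he : b e e' = 0) (x y : S) : b (μ e x) (μ e' y) = -b (μ e y) (μ e' x) := by
  linear_combination hμ.polar hb h2 e e' x y + 2 * b x y * he

theorem left_mul_bijective [FiniteDimensional F S] (hμ : IsComposition b μ) (hb : b.IsSymm)
    (hnd : b.SeparatingLeft) (h2 : (2 : F) ≠ 0) {e : S} (he : b e e = 1) :
    Function.Bijective (μ e) := by
  have hinj : Function.Injective (μ e) := by
    rw [← LinearMap.ker_eq_bot, LinearMap.ker_eq_bot']
    intro x hx
    refine hnd x fun y => ?_
    rw [← hμ.left_mul_isometry hb h2 he, hx, map_zero, LinearMap.zero_apply]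
  exact ⟨hinj, LinearMap.injective_iff_surjective.mp hinj⟩

theorem exists_isCliffordFamily_of_orthonormal [FiniteDimensional F S] (hμ : IsComposition b μ)
    (hb : b.IsSymm) (hnd : b.SeparatingLeft) (h2 : (2 : F) ≠ 0) {e : S} (he : b e e = 1)
    {m : ℕ} {u : Fin m → S} (hu : ∀ i j, b (u i) (u j) = if i = j then 1 else 0)
    (hue : ∀ i, b (u i) e = 0) :
    ∃ A : Fin m → Module.End F S, IsCliffordFamily A ∧ ∀ i, b.IsSkewAdjoint (A i) := by
  let E := LinearEquiv.ofBijective (μ e) (hμ.left_mul_bijective hb hnd h2 he)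
  let A : Fin m → Module.End F S := fun i => μ (u i) ∘ₗ E.symm.toLinearMap
  have hAE : ∀ i x, A i (E x) = μ (u i) x := fun i x => by simp [A]
  have hE : ∀ x, E x = μ e x := fun _ => rfl
  have hskew : ∀ i, b.IsSkewAdjoint (A i) := fun i => by
    rw [isSkewAdjoint_iff]
    intro x y
    obtain ⟨x, rfl⟩ := E.surjective x
    obtain ⟨y, rfl⟩ := E.surjective y
    rw [hAE, hAE, hE, hE, hμ.left_mul_anticomm hb h2 (hue i), hb.eq (μ _ x)]
  have hiso : ∀ i x y, b (A i x) (A i y) = b x y := fun i x y => by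
    obtain ⟨x, rfl⟩ := E.surjective x
    obtain ⟨y, rfl⟩ := E.surjective y
    rw [hAE, hAE, hE, hE, hμ.left_mul_isometry hb h2 (by rw [hu, if_pos rfl]),
      hμ.left_mul_isometry hb h2 he]
  have hcross : ∀ i j, i ≠ j → ∀ x y, b (A j x) (A i y) = -b (A i x) (A j y) :=
    fun i j hij x y => by
    obtain ⟨x, rfl⟩ := E.surjective x
    obtain ⟨y, rfl⟩ := E.surjective y
    rw [hAE, hAE, hAE, hAE, hμ.left_mul_anticomm hb h2 (by rw [hu, if_neg hij.symm]),
      hb.eq (μ _ y)]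
  exact ⟨A, ⟨fun i => mul_self_eq_neg_one_of_isSkewAdjoint hnd (hskew i) (hiso i),
    fun i j hij => anticomm_of_isSkewAdjoint hnd (hskew i) (hskew j) (hcross i j hij)⟩, hskew⟩

theorem exists_isCliffordFamily [IsAlgClosed F] [FiniteDimensional F S]
    (hμ : IsComposition b μ) (hb : b.IsSymm) (hnd : b.SeparatingLeft) (h2 : (2 : F) ≠ 0)
    {m : ℕ} (hm : finrank F S = m + 1) :
    ∃ A : Fin m → Module.End F S, IsCliffordFamily A ∧ ∀ i, b.IsSkewAdjoint (A i) := by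
  obtain ⟨w₀, hw₀⟩ := exists_orthonormal_basis_of_isAlgClosed h2 hb hnd
  let w : Fin (m + 1) → S := fun i => w₀ (Fin.cast hm.symm i)
  have hw : ∀ i j, b (w i) (w j) = if i = j then 1 else 0 := fun i j => by
    simp only [w, hw₀, Fin.cast_inj]
  exact hμ.exists_isCliffordFamily_of_orthonormal hb hnd h2 (e := w (Fin.last m))
    (by rw [hw, if_pos rfl]) (u := fun i => w i.castSucc)
    (fun i j => by simp only [hw, Fin.castSucc_inj])
    fun i => by rw [hw, if_neg (Fin.castSucc_lt_last i).ne]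

theorem finrank_mem_one_two_four_eight [IsAlgClosed F] [FiniteDimensional F S] [Nontrivial S]
    (hμ : IsComposition b μ) (hb : b.IsSymm) (hnd : b.SeparatingLeft) (h2 : (2 : F) ≠ 0) :
    finrank F S ∈ ({1, 2, 4, 8} : Set ℕ) := by
  obtain ⟨m, hm⟩ := Nat.exists_eq_succ_of_ne_zero (Module.finrank_pos (R := F) (M := S)).ne'
  obtain ⟨A, hA, hskew⟩ := hμ.exists_isCliffordFamily hb hnd h2 hm
  by_contra hmem
  simp only [Set.mem_insert_iff, Set.mem_singleton_iff] at hmem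
  rcases Nat.even_or_odd (finrank F S) with heven | hodd
  · by_cases h6 : finrank F S = 6
    · obtain rfl : m = 5 := by omega
      exact hA.finrank_ne_six h2 hb hnd hskew h6
    · obtain ⟨k, rfl⟩ : ∃ k, m = k + 1 := ⟨m - 1, by omega⟩
      have hle := hA.two_pow_le_finrank_sq fun h => h2 (by linear_combination -h)
      rw [hm] at hle heven
      have := Nat.add_two_sq_lt_two_pow (k := k) (by rcases heven with ⟨r, hr⟩; omega)
      linarith
  · exact Nat.not_even_iff_odd.mpr hodd
      (hA.even_finrank h2 (by rcases hodd with ⟨r, hr⟩; omega))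

end IsComposition

end Composition

namespace CyclicComp

variable {F L V : Type*} [Field F] [CommRing L] [Algebra F L] [AddCommGroup V]
  (C : CyclicComp F L V)

theorem zero_smul (x : V) : C.smul 0 x = 0 := by
  simpa using C.add_smul 0 0 x

theorem neg_one_smul (x : V) : C.smul (-1) x = -x := by
  refine eq_neg_of_add_eq_zero_left ?_
  rw [← C.zero_smul x, ← neg_add_cancel (1 : L), C.add_smul, C.one_smul]

theorem Q_neg (x : V) : C.Q (-x) = C.Q x := by
  rw [← C.neg_one_smul, C.Q_smul, neg_one_sq, one_mul]

theorem bQ_comm (x y : V) : C.bQ x y = C.bQ y x := by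
  rw [C.bQ_def, C.bQ_def, add_comm x]
  ring

theorem bQ_smul_right (ℓ : L) (x y : V) : C.bQ x (C.smul ℓ y) = ℓ * C.bQ x y := by
  rw [C.bQ_comm, C.bQ_smul_left, C.bQ_comm]

theorem bQ_neg_left (x y : V) : C.bQ (-x) y = -C.bQ x y := by
  rw [← C.neg_one_smul, C.bQ_smul_left, neg_one_mul]

theorem bQ_self (x : V) : C.bQ x x = 2 * C.Q x := by
  have h := C.Q_smul 2 x
  rw [show (2 : L) = 1 + 1 from one_add_one_eq_two.symm, C.add_smul, C.one_smul] at h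
  rw [C.bQ_def, h]
  ring

/-- `2 bQ (x + x') y = 2 (bQ x y + bQ x' y)` is a combination of instances of `bQ_def`, using
only `Q (-u) = Q u` and `bQ (-u) v = -bQ u v`. -/
theorem bQ_add_left (h2 : IsUnit (2 : L)) (x x' y : V) :
    C.bQ (x + x') y = C.bQ x y + C.bQ x' y := by
  have hQ : ∀ u v : V, C.Q (u + v) = C.Q u + C.Q v + C.bQ u v := fun u v => by
    rw [C.bQ_def]; ring
  have hQ' : ∀ u v : V, C.Q (-u + v) = C.Q u + C.Q v - C.bQ u v := fun u v => by
    rw [hQ, C.Q_neg, C.bQ_neg_left]; ring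
  refine h2.mul_left_cancel ?_
  have e1 := hQ (x + x') y
  have e2 : C.Q (x + x' + y) = C.Q x' + C.Q (x + y) + C.bQ x' (x + y) := by
    rw [← hQ, add_comm x x', add_assoc]
  have e3 := hQ' (x + x') y
  have e4 : C.Q (-(x + x') + y) = C.Q x + C.Q (-x' + y) - C.bQ x (-x' + y) := by
    rw [← hQ', neg_add, add_assoc]
  have e5 := hQ' x' y
  have e6 := C.bQ_def x (-x' + y)
  have e7 : C.Q (x + (-x' + y)) = C.Q x' + C.Q (x + y) - C.bQ x' (x + y) := by
    rw [← hQ', add_left_comm]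
  linear_combination -e1 + e2 + e3 - e4 + e6 + e7 - 2 * e5 - 2 * C.bQ_def x y

theorem bQ_add_right (h2 : IsUnit (2 : L)) (x y y' : V) :
    C.bQ x (y + y') = C.bQ x y + C.bQ x y' := by
  rw [C.bQ_comm, C.bQ_add_left h2, C.bQ_comm y, C.bQ_comm y']

end CyclicComp

theorem isUnit_two_of_two_ne_zero {F L : Type*} [Field F] [Semiring L] [Algebra F L]
    (h2 : (2 : F) ≠ 0) : IsUnit (2 : L) := by
  rw [← map_ofNat (algebraMap F L) 2]
  exact (Ne.isUnit h2).map _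

namespace CyclicComp

variable {F V : Type*} [Field F] [AddCommGroup V] [Module F V] (C : CyclicComp F (F × F × F) V)
  (hFs : ∀ (c : F) (v : V), C.smul (algebraMap F (F × F × F) c) v = c • v)

def mulₗ : V →ₗ[F] V →ₗ[F] V :=
  LinearMap.mk₂ F C.mul C.mul_add_left
    (fun c x y => by rw [← hFs, C.mul_smul_left, C.ρ.commutes, hFs])
    C.mul_add_right
    (fun c x y => by rw [← hFs, C.mul_smul_right, C.ρ.commutes, C.ρ.commutes, hFs])

/-- On the identity component of a Type III grading `bQ` takes values in `F · 1`, so nothing is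
lost there by keeping only the first coordinate. -/
def bQFst (h2 : IsUnit (2 : F × F × F)) : LinearMap.BilinForm F V :=
  LinearMap.mk₂ F (fun x y => (C.bQ x y).1)
    (fun x x' y => by rw [C.bQ_add_left h2, Prod.fst_add])
    (fun c x y => by rw [← hFs, C.bQ_smul_left, Prod.fst_mul]; rfl)
    (fun x y y' => by rw [C.bQ_add_right h2, Prod.fst_add])
    (fun c x y => by rw [← hFs, C.bQ_smul_right, Prod.fst_mul]; rfl)

end CyclicComp

structure IsTypeIIIGrading {F V G : Type*} [Field F] [AddCommGroup V] [Module F V] [CommGroup G]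
    [DecidableEq G] (C : CyclicComp F (F × F × F) V) (W : G → Submodule F V) (ω : F) (h : G) :
    Prop where
  isInternal : DirectSum.IsInternal W
  omega_pow_three : ω ^ 3 = 1
  pow_three : h ^ 3 = 1
  ne_one : h ≠ 1
  smul_mem : ∀ (a : G) (x : V), x ∈ W a → C.smul ((1 : F), ω, ω ^ 2) x ∈ W (h * a)
  mul_mem : ∀ (a b : G) (x y : V), x ∈ W a → y ∈ W b → C.mul x y ∈ W (a * b)
  bQ_eq : ∀ (a b : G) (x y : V), x ∈ W a → y ∈ W b →
    ∃ (k : ℕ) (c : F), C.bQ x y = c • ((1 : F), ω, ω ^ 2) ^ k ∧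
      (C.bQ x y ≠ 0 → h ^ k = a * b)

namespace IsTypeIIIGrading

variable {F V G : Type*} [Field F] [AddCommGroup V] [Module F V] [CommGroup G] [DecidableEq G]
  {C : CyclicComp F (F × F × F) V} {W : G → Submodule F V} {ω : F} {h : G}

theorem xi_pow_three (hΓ : IsTypeIIIGrading C W ω h) : ((1 : F), ω, ω ^ 2) ^ 3 = 1 := by
  have h3 := hΓ.omega_pow_three
  ext <;> simp only [Prod.pow_fst, Prod.pow_snd, Prod.fst_one, Prod.snd_one, one_pow]
  · exact h3
  · rw [← pow_mul, mul_comm, pow_mul, h3, one_pow]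

theorem smul_xi_pow_mem (hΓ : IsTypeIIIGrading C W ω h) (k : ℕ) {a : G} {x : V}
    (hx : x ∈ W a) : C.smul (((1 : F), ω, ω ^ 2) ^ k) x ∈ W (h ^ k * a) := by
  induction k with
  | zero => simpa [C.one_smul] using hx
  | succ k ih =>
    rw [pow_succ' ((1 : F), ω, ω ^ 2), C.mul_smul, pow_succ' h, mul_assoc]
    exact hΓ.smul_mem _ _ ih

theorem bQ_eq_algebraMap (hΓ : IsTypeIIIGrading C W ω h) {a b : G} {x y : V} (hx : x ∈ W a)
    (hy : y ∈ W b) (hab : a * b = 1) : ∃ c : F, C.bQ x y = algebraMap F (F × F × F) c := by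
  obtain ⟨k, c, hc, hk⟩ := hΓ.bQ_eq a b x y hx hy
  by_cases h0 : C.bQ x y = 0
  · exact ⟨0, by rw [h0, map_zero]⟩
  have : Fact (Nat.Prime 3) := ⟨Nat.prime_three⟩
  obtain ⟨t, rfl⟩ : 3 ∣ k := by
    rw [← orderOf_eq_prime hΓ.pow_three hΓ.ne_one]
    exact orderOf_dvd_of_pow_eq_one ((hk h0).trans hab)
  exact ⟨c, by rw [hc, pow_mul, hΓ.xi_pow_three, one_pow, Algebra.algebraMap_eq_smul_one]⟩

/-- If `bQ x y ≠ 0` then `y ∈ W (h ^ k)`, and `ξ ^ (2 k) • y` lies in `W 1`. -/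
theorem bQ_eq_zero_of_forall_mem_one (hΓ : IsTypeIIIGrading C W ω h) {x : V} (hx : x ∈ W 1)
    (hx0 : ∀ y ∈ W 1, C.bQ x y = 0) {a : G} {y : V} (hy : y ∈ W a) : C.bQ x y = 0 := by
  by_contra h0
  obtain ⟨k, -, -, hk⟩ := hΓ.bQ_eq 1 a x y hx hy
  rw [one_mul] at hk
  have hmem := hΓ.smul_xi_pow_mem (2 * k) hy
  rw [← hk h0, ← pow_add, show 2 * k + k = 3 * k by ring, pow_mul, hΓ.pow_three,
    one_pow] at hmem
  have hunit : IsUnit (((1 : F), ω, ω ^ 2) ^ (2 * k)) :=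
    (IsUnit.of_pow_eq_one hΓ.xi_pow_three three_ne_zero).pow _
  exact h0 (hunit.mul_right_eq_zero.mp (C.bQ_smul_right _ x y ▸ hx0 _ hmem))

theorem eq_zero_of_forall_bQ_eq_zero (hΓ : IsTypeIIIGrading C W ω h) (h2 : (2 : F) ≠ 0)
    {x : V} (hx : x ∈ W 1) (hx0 : ∀ y ∈ W 1, C.bQ x y = 0) : x = 0 := by
  refine C.nondeg x fun y => ?_
  have hy : y ∈ ⨆ a, W a := by
    rw [hΓ.isInternal.submodule_iSup_eq_top]
    trivial
  refine Submodule.iSup_induction W (motive := fun y => C.bQ x y = 0) hy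
    (fun a y hy => hΓ.bQ_eq_zero_of_forall_mem_one hx hx0 hy) ?_ fun y y' hy hy' => ?_
  · simpa [C.zero_smul] using C.bQ_smul_right 0 x 0
  · rw [C.bQ_add_right (isUnit_two_of_two_ne_zero h2), hy, hy', add_zero]

theorem mul_mem_one (hΓ : IsTypeIIIGrading C W ω h) {x y : V} (hx : x ∈ W 1) (hy : y ∈ W 1) :
    C.mul x y ∈ W 1 := by
  simpa using hΓ.mul_mem 1 1 x y hx hy

theorem Q_eq_algebraMap (hΓ : IsTypeIIIGrading C W ω h) (h2 : (2 : F) ≠ 0) {x : V}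
    (hx : x ∈ W 1) : ∃ c : F, C.Q x = algebraMap F (F × F × F) c := by
  obtain ⟨c, hc⟩ := hΓ.bQ_eq_algebraMap hx hx (one_mul 1)
  refine ⟨c / 2, ?_⟩
  rw [C.bQ_self, ← map_ofNat (algebraMap F (F × F × F)) 2] at hc
  refine ((Ne.isUnit h2).map (algebraMap F (F × F × F))).mul_left_cancel ?_
  rw [hc, ← map_mul, mul_div_cancel₀ _ h2]

theorem Q_mul (hΓ : IsTypeIIIGrading C W ω h) (h2 : (2 : F) ≠ 0) {x y : V} (hx : x ∈ W 1)
    (hy : y ∈ W 1) : C.Q (C.mul x y) = C.Q x * C.Q y := by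
  obtain ⟨c, hc⟩ := hΓ.Q_eq_algebraMap h2 hx
  obtain ⟨d, hd⟩ := hΓ.Q_eq_algebraMap h2 hy
  rw [C.comp, hc, hd, C.ρ.commutes, C.ρ.commutes, C.ρ.commutes]

theorem bQ_mul_assoc (hΓ : IsTypeIIIGrading C W ω h) {x y z : V} (hx : x ∈ W 1)
    (hy : y ∈ W 1) (hz : z ∈ W 1) : C.bQ (C.mul x y) z = C.bQ x (C.mul y z) := by
  obtain ⟨c, hc⟩ := hΓ.bQ_eq_algebraMap (hΓ.mul_mem_one hy hz) hx (one_mul 1)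
  rw [C.assoc1, hc, C.ρ.commutes, ← hc, C.bQ_comm]

theorem finrank_identity_component_mem [IsAlgClosed F] [FiniteDimensional F V]
    (hΓ : IsTypeIIIGrading C W ω h) (h2 : (2 : F) ≠ 0)
    (hFs : ∀ (c : F) (v : V), C.smul (algebraMap F (F × F × F) c) v = c • v)
    (hW : W 1 ≠ ⊥) : Module.finrank F (W 1) ∈ ({1, 2, 4, 8} : Set ℕ) := by
  have h2L : IsUnit (2 : F × F × F) := isUnit_two_of_two_ne_zero h2
  have : Nontrivial (W 1) := Submodule.nontrivial_iff_ne_bot.mpr hW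
  let b : LinearMap.BilinForm F (W 1) := (2 : F)⁻¹ • (C.bQFst hFs h2L).restrict (W 1)
  let μ : W 1 →ₗ[F] W 1 →ₗ[F] W 1 :=
    ((C.mulₗ hFs).domRestrict₁₂ (W 1) (W 1)).codRestrict₂ (W 1).subtype
      Subtype.val_injective fun x y => by
        rw [Submodule.range_subtype]
        exact hΓ.mul_mem_one x.2 y.2
  have hb : ∀ x y : W 1, b x y = (2 : F)⁻¹ * (C.bQ x y).1 := fun _ _ => rfl
  have hμ : ∀ x y : W 1, (μ x y : V) = C.mul x y :=
    LinearMap.codRestrict₂_apply _ (W 1).subtype _ _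
  have hbself : ∀ x : W 1, b x x = (C.Q x).1 := fun x => by
    rw [hb, C.bQ_self, Prod.fst_mul]
    field_simp
    rfl
  refine IsComposition.finrank_mem_one_two_four_eight (b := b) (μ := μ) (fun x y => ?_)
    ⟨fun x y => by rw [hb, hb, C.bQ_comm]⟩ (fun x hx => ?_) h2
  · rw [hbself, hbself, hbself, hμ, hΓ.Q_mul h2 x.2 y.2, Prod.fst_mul]
  · refine Subtype.ext (hΓ.eq_zero_of_forall_bQ_eq_zero h2 x.2 fun y hy => ?_)
    obtain ⟨c, hc⟩ := hΓ.bQ_eq_algebraMap x.2 hy (one_mul 1)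
    have h0 := hx ⟨y, hy⟩
    rw [hb, hc] at h0
    change (2 : F)⁻¹ * c = 0 at h0
    rw [hc, (mul_eq_zero.mp h0).resolve_left (inv_ne_zero h2), map_zero]

end IsTypeIIIGrading

theorem typeIII_identity_component_symmetric_composition_general
    {F V G : Type*} [Field F] [IsAlgClosed F]
    (h2 : ringChar F ≠ 2)
    [AddCommGroup V] [Module F V] [CommGroup G] [DecidableEq G]
    (C : CyclicComp F (F × F × F) V)
    (hFs : ∀ (c : F) (v : V), C.smul (algebraMap F (F × F × F) c) v = c • v)
    (hrank : Module.finrank F V = 24)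
    (W : G → Submodule F V) (hint : DirectSum.IsInternal W)
    (ω : F) (hω3 : ω ^ 3 = 1)
    (h : G) (hh1 : h ≠ 1) (hh3 : h ^ 3 = 1)
    (hξ : ∀ (a : G) (x : V), x ∈ W a →
      C.smul ((1 : F), ω, ω ^ 2) x ∈ W (h * a))
    (hmulg : ∀ (a b : G) (x y : V), x ∈ W a → y ∈ W b → C.mul x y ∈ W (a * b))
    (hbQg : ∀ (a b : G) (x y : V), x ∈ W a → y ∈ W b →
      ∃ (k : ℕ) (c : F), C.bQ x y = c • ((1 : F), ω, ω ^ 2) ^ k ∧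
        (C.bQ x y ≠ 0 → h ^ k = a * b))
    (hVe : W 1 ≠ ⊥) :
    (∀ x y : V, x ∈ W 1 → y ∈ W 1 → C.mul x y ∈ W 1) ∧
      (∀ x : V, x ∈ W 1 → ∃ c : F, C.Q x = algebraMap F (F × F × F) c) ∧
      (∀ x y : V, x ∈ W 1 → y ∈ W 1 → C.Q (C.mul x y) = C.Q x * C.Q y) ∧
      (∀ x y z : V, x ∈ W 1 → y ∈ W 1 → z ∈ W 1 →
        C.bQ (C.mul x y) z = C.bQ x (C.mul y z)) ∧
      (∀ x : V, x ∈ W 1 → (∀ y : V, y ∈ W 1 → C.bQ x y = 0) → x = 0) ∧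
      Module.finrank F (W 1) ∈ ({1, 2, 4, 8} : Set ℕ) := by
  have hΓ : IsTypeIIIGrading C W ω h := ⟨hint, hω3, hh3, hh1, hξ, hmulg, hbQg⟩
  have h2F : (2 : F) ≠ 0 := Ring.two_ne_zero h2
  have : FiniteDimensional F V := Module.finite_of_finrank_pos (by rw [hrank]; norm_num)
  exact ⟨fun _ _ => hΓ.mul_mem_one, fun _ => hΓ.Q_eq_algebraMap h2F,
    fun _ _ => hΓ.Q_mul h2F, fun _ _ _ => hΓ.bQ_mul_assoc,
    fun _ => hΓ.eq_zero_of_forall_bQ_eq_zero h2F, hΓ.finrank_identity_component_mem h2F hFs hVe⟩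

/-- For a Type III grading by an abelian group `G` on the cyclic
composition algebra `(V, L, ρ, *, Q)` of rank 8 (here `L = F×F×F`,
`dim_F V = 24`, the grading on `L` has one-dimensional components with `ξ =
(1,ω,ω²)` of degree `h` of order 3, the product and `b_Q` are degree-preserving)
with `V_e ≠ 0`: the identity component `V_e` is a subalgebra of `(V,*)` on which
`Q` takes values in `F·1`, `(V_e, *, Q|_{V_e})` is a symmetric composition algebra
over `F`, and hence `dim_F V_e ∈ {1, 2, 4, 8}`. -/
theorem typeIII_identity_component_symmetric_composition
    {F V G : Type*} [Field F] [IsAlgClosed F]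
    (h2 : ringChar F ≠ 2) (h3 : ringChar F ≠ 3)
    [AddCommGroup V] [Module F V] [CommGroup G] [DecidableEq G]
    (C : CyclicComp F (F × F × F) V)
    (hρ : C.ρ = cyclicShift F)
    (hFs : ∀ (c : F) (v : V), C.smul (algebraMap F (F × F × F) c) v = c • v)
    (hrank : Module.finrank F V = 24)
    (W : G → Submodule F V) (hint : DirectSum.IsInternal W)
    (ω : F) (hω1 : ω ≠ 1) (hω3 : ω ^ 3 = 1)
    (h : G) (hh1 : h ≠ 1) (hh3 : h ^ 3 = 1)
    (hξ : ∀ (a : G) (x : V), x ∈ W a →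
      C.smul ((1 : F), ω, ω ^ 2) x ∈ W (h * a))
    (hmulg : ∀ (a b : G) (x y : V), x ∈ W a → y ∈ W b → C.mul x y ∈ W (a * b))
    (hbQg : ∀ (a b : G) (x y : V), x ∈ W a → y ∈ W b →
      ∃ (k : ℕ) (c : F), C.bQ x y = c • ((1 : F), ω, ω ^ 2) ^ k ∧
        (C.bQ x y ≠ 0 → h ^ k = a * b))
    (hVe : W 1 ≠ ⊥) :
    (∀ x y : V, x ∈ W 1 → y ∈ W 1 → C.mul x y ∈ W 1) ∧
      (∀ x : V, x ∈ W 1 → ∃ c : F, C.Q x = algebraMap F (F × F × F) c) ∧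
      (∀ x y : V, x ∈ W 1 → y ∈ W 1 → C.Q (C.mul x y) = C.Q x * C.Q y) ∧
      (∀ x y z : V, x ∈ W 1 → y ∈ W 1 → z ∈ W 1 →
        C.bQ (C.mul x y) z = C.bQ x (C.mul y z)) ∧
      (∀ x : V, x ∈ W 1 → (∀ y : V, y ∈ W 1 → C.bQ x y = 0) → x = 0) ∧
      Module.finrank F (W 1) ∈ ({1, 2, 4, 8} : Set ℕ) :=
  typeIII_identity_component_symmetric_composition_general h2 C hFs hrank W hint ω hω3 h hh1 hh3 hξ
    hmulg hbQg hVe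
end
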